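/- arXiv:2411.16935 — 5 statements merged into one kernel-verified Lean document; each statement's English description precedes it below -/
import Mathlib

section
/- Let D ⊆ ℝ² be the closed unit disk centered at the origin and let 0 < l ≤ 2. Then the Buffon probability of D satisfies P_D(l) = (2/π)·(arccos(l/2) − (l/2)·√(1 − l²/4)). -/
open MeasureTheory Metric Set Real Pointwise
open scoped ENNReal RealInnerProductSpace

noncomputable section

/-- The Euclidean plane. -/
abbrev Plane := EuclideanSpace ℝ (Fin 2)

/-- The unit vector in the plane making angle `θ` with the horizontal axis. -/
def needleDir (θ : ℝ) : Plane :=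
  (EuclideanSpace.equiv (Fin 2) ℝ).symm ![Real.cos θ, Real.sin θ]

/-- The set of directions `θ ∈ [0, 2π)` for which the needle of length `l`
originating at `x` has its other endpoint in `X`. -/
def needleAngles (X : Set Plane) (l : ℝ) (x : Plane) : Set ℝ :=
  {θ ∈ Set.Ico 0 (2 * π) | x + l • needleDir θ ∈ X}

/-- The pointwise probability `p_X(x, l)` that a random needle of length `l` at `x`
lies within `X`. -/
def pointwiseProb (X : Set Plane) (x : Plane) (l : ℝ) : ℝ :=
  (1 / (2 * π)) * (volume (needleAngles X l x)).toReal

/-- The Buffon probability `P_X(l)` that a random needle of length `l` originating at a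
uniformly chosen point of `X` lies within `X`; taken to be `0` when `X` has zero area. -/
def buffonProb (X : Set Plane) (l : ℝ) : ℝ :=
  if volume X = 0 then 0
  else (1 / (2 * π * (volume X).toReal)) *
    ∫ x in X, (volume (needleAngles X l x)).toReal

/-- The interior parallel `X_r`: the Minkowski difference of `X` with the closed ball
of radius `r`. -/
def innerParallel (X : Set Plane) (r : ℝ) : Set Plane :=
  {x : Plane | Metric.closedBall x r ⊆ X}

/-- The exterior parallel `X^r`: the Minkowski sum of `X` with the closed ball
of radius `r`. -/
def exterParallel (X : Set Plane) (r : ℝ) : Set Plane :=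
  X + Metric.closedBall (0 : Plane) r

end

/-! Exchanging the integrations over the base point and the direction (Tonelli) turns `P_X(l)`
into the mean over `θ` of the area of the lens `X ∩ (X - l u(θ))`, divided by the area of `X`.
For the unit disk a reflection shows that this area does not depend on `θ`. For `θ = 0`, the
lens slice at abscissa `a` is a chord of length `2 √(1 - max(a², (a + l)²))`; splitting at
`a = -l/2` shows that the lens consists of two circular segments, each of area
`arccos (l/2) - (l/2) √(1 - l²/4)`. -/

lemma continuous_needleDir : Continuous needleDir :=
  (EuclideanSpace.equiv (Fin 2) ℝ).symm.continuous.comp <|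
    continuous_pi fun i => by fin_cases i <;> simp <;> fun_prop

@[simp]
lemma norm_needleDir (θ : ℝ) : ‖needleDir θ‖ = 1 := by
  simp [needleDir, EuclideanSpace.norm_eq, Fin.sum_univ_two]

theorem setIntegral_volume_needleAngles {X : Set Plane} (hX : MeasurableSet X)
    (hX_fin : volume X ≠ ∞) (l : ℝ) :
    ∫ x in X, (volume (needleAngles X l x)).toReal =
      ∫ θ in Ico 0 (2 * π), (volume (X ∩ (· + l • needleDir θ) ⁻¹' X)).toReal := by
  set T : Set (Plane × ℝ) := {p | p.1 + l • needleDir p.2 ∈ X}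
  have hT : MeasurableSet T :=
    (continuous_fst.add ((continuous_needleDir.comp continuous_snd).const_smul l)).measurable hX
  set μ := volume.restrict X
  set ν := volume.restrict (Ico 0 (2 * π))
  have : IsFiniteMeasure μ := isFiniteMeasure_restrict.mpr hX_fin
  have : IsFiniteMeasure ν := isFiniteMeasure_restrict.mpr measure_Ico_lt_top.ne
  have h_angles (x : Plane) : volume (needleAngles X l x) = ν (Prod.mk x ⁻¹' T) := by
    rw [Measure.restrict_apply (measurable_prodMk_left hT)]
    congr 1
    ext θ
    simp [needleAngles, T, and_comm]
  have h_lens (θ : ℝ) : volume (X ∩ (· + l • needleDir θ) ⁻¹' X) = μ ((·, θ) ⁻¹' T) := by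
    rw [Measure.restrict_apply (measurable_prodMk_right hT), inter_comm]
    rfl
  simp_rw [h_angles, h_lens]
  rw [integral_toReal (measurable_measure_prodMk_left hT).aemeasurable
      (ae_of_all _ fun _ => measure_lt_top _ _),
    integral_toReal (measurable_measure_prodMk_right hT).aemeasurable
      (ae_of_all _ fun _ => measure_lt_top _ _),
    ← Measure.prod_apply hT, ← Measure.prod_apply_symm hT]

theorem buffonProb_eq_setIntegral_volume_inter {X : Set Plane} (hX : MeasurableSet X)
    (hX_fin : volume X ≠ ∞) (l : ℝ) :
    buffonProb X l = 1 / (2 * π * (volume X).toReal) *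
      ∫ θ in Ico 0 (2 * π), (volume (X ∩ (· + l • needleDir θ) ⁻¹' X)).toReal := by
  rw [buffonProb, setIntegral_volume_needleAngles hX hX_fin]
  split_ifs with h <;> simp [h]

theorem volume_closedBall_inter_preimage_add_congr {E : Type*} [NormedAddCommGroup E]
    [InnerProductSpace ℝ E] [FiniteDimensional ℝ E] [MeasurableSpace E] [BorelSpace E]
    {v w : E} (h : ‖v‖ = ‖w‖) (r : ℝ) :
    volume (closedBall (0 : E) r ∩ (· + v) ⁻¹' closedBall 0 r) =
      volume (closedBall (0 : E) r ∩ (· + w) ⁻¹' closedBall 0 r) := by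
  let R := (ℝ ∙ (v - w))ᗮ.reflection
  have hR : R v = w := Submodule.reflection_sub h
  have hpre : R ⁻¹' (closedBall 0 r ∩ (· + w) ⁻¹' closedBall 0 r) =
      closedBall 0 r ∩ (· + v) ⁻¹' closedBall 0 r := by
    ext x
    simp only [mem_inter_iff, mem_preimage, mem_closedBall_zero_iff, ← hR, ← map_add,
      LinearIsometryEquiv.norm_map]
  have hmeas : MeasurableSet (closedBall (0 : E) r ∩ (· + w) ⁻¹' closedBall 0 r) :=
    measurableSet_closedBall.inter (measurable_add_const w measurableSet_closedBall)
  rw [← hpre, R.measurePreserving.measure_preimage hmeas.nullMeasurableSet]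

lemma volume_setOf_sq_le (c : ℝ) : volume {b : ℝ | b ^ 2 ≤ c} = ENNReal.ofReal (2 * √c) := by
  -- for `c < 0` both sides vanish, since then `√c = 0`
  rcases le_or_gt 0 c with hc | hc
  · rw [show {b : ℝ | b ^ 2 ≤ c} = Icc (-√c) √c from ext fun b => Real.sq_le hc,
      Real.volume_Icc]
    ring_nf
  · rw [show {b : ℝ | b ^ 2 ≤ c} = ∅ from eq_empty_of_forall_notMem fun b hb =>
        (hc.trans_le (sq_nonneg b)).not_ge hb,
      Real.sqrt_eq_zero_of_nonpos hc.le]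
    simp

lemma volume_lens_prod_eq_integral {l : ℝ} (hl2 : l ≤ 2) :
    volume {p : ℝ × ℝ | p.1 ^ 2 + p.2 ^ 2 ≤ 1 ∧ (p.1 + l) ^ 2 + p.2 ^ 2 ≤ 1} =
      ENNReal.ofReal (∫ a in (-1)..(1 - l), 2 * √(1 - max (a ^ 2) ((a + l) ^ 2))) := by
  set S := {p : ℝ × ℝ | p.1 ^ 2 + p.2 ^ 2 ≤ 1 ∧ (p.1 + l) ^ 2 + p.2 ^ 2 ≤ 1}
  have hS : MeasurableSet S := by measurability
  have h_slice (a : ℝ) : Prod.mk a ⁻¹' S = {b | b ^ 2 ≤ 1 - max (a ^ 2) ((a + l) ^ 2)} := by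
    ext b
    rw [mem_ofPred_eq, le_sub_iff_add_le', ← max_add_add_right, max_le_iff]
    rfl
  have h_support : (fun a => ENNReal.ofReal (2 * √(1 - max (a ^ 2) ((a + l) ^ 2)))).support ⊆
      Icc (-1) (1 - l) := by
    intro a ha
    have : max (a ^ 2) ((a + l) ^ 2) < 1 := by
      by_contra! h
      simp [Real.sqrt_eq_zero_of_nonpos (sub_nonpos.mpr h)] at ha
    rw [max_lt_iff] at this
    constructor <;> nlinarith [this.1, this.2]
  rw [Measure.volume_eq_prod, Measure.prod_apply hS]
  simp_rw [h_slice, volume_setOf_sq_le]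
  rw [← setLIntegral_eq_of_support_subset h_support, ← ofReal_integral_eq_lintegral_ofReal,
    intervalIntegral.integral_of_le (by linarith), integral_Icc_eq_integral_Ioc]
  · exact (by fun_prop : Continuous fun a : ℝ => 2 * √(1 - max (a ^ 2) ((a + l) ^ 2)))
      |>.integrableOn_Icc
  · exact ae_of_all _ fun _ => by positivity

lemma hasDerivAt_mul_sqrt_one_sub_sq_sub_arccos {x : ℝ} (h1 : -1 < x) (h2 : x < 1) :
    HasDerivAt (fun s => s * √(1 - s ^ 2) - arccos s) (2 * √(1 - x ^ 2)) x := by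
  have hpos : 0 < 1 - x ^ 2 := by nlinarith
  have hsqrt : HasDerivAt (fun s => √(1 - s ^ 2)) (-x / √(1 - x ^ 2)) x := by
    convert ((hasDerivAt_pow 2 x).const_sub 1).sqrt hpos.ne' using 1
    ring
  refine (((hasDerivAt_id' x).mul hsqrt).sub (hasDerivAt_arccos h1.ne' h2.ne)).congr_deriv ?_
  have := Real.sq_sqrt hpos.le
  field_simp
  linarith

lemma integral_sqrt_one_sub_sq_of_le_one {a : ℝ} (h1 : -1 ≤ a) (h2 : a ≤ 1) :
    ∫ s in a..1, 2 * √(1 - s ^ 2) = arccos a - a * √(1 - a ^ 2) := by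
  have hcont : Continuous fun s : ℝ => 2 * √(1 - s ^ 2) := by fun_prop
  rw [intervalIntegral.integral_eq_sub_of_hasDerivAt_of_le h2 (by fun_prop)
    (fun x hx => hasDerivAt_mul_sqrt_one_sub_sq_sub_arccos (h1.trans_lt hx.1) hx.2)
    (hcont.intervalIntegrable _ _)]
  simp

lemma integral_lens_chord {l : ℝ} (hl0 : 0 ≤ l) (hl2 : l ≤ 2) :
    ∫ a in (-1)..(1 - l), 2 * √(1 - max (a ^ 2) ((a + l) ^ 2)) =
      2 * (arccos (l / 2) - l / 2 * √(1 - l ^ 2 / 4)) := by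
  have hcont : Continuous fun a : ℝ => 2 * √(1 - max (a ^ 2) ((a + l) ^ 2)) := by fun_prop
  have h_cap :
      ∫ s in (l / 2)..1, 2 * √(1 - s ^ 2) = arccos (l / 2) - l / 2 * √(1 - l ^ 2 / 4) := by
    rw [integral_sqrt_one_sub_sq_of_le_one (by linarith) (by linarith)]
    ring_nf
  have h_left : ∫ a in (-1)..(-(l / 2)), 2 * √(1 - max (a ^ 2) ((a + l) ^ 2)) =
      ∫ s in (l / 2)..1, 2 * √(1 - s ^ 2) :=
    calc _ = ∫ a in (-1)..(-(l / 2)), 2 * √(1 - (-a) ^ 2) := by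
          refine intervalIntegral.integral_congr fun a ha => ?_
          rw [uIcc_of_le (by linarith)] at ha
          rw [max_eq_left (by nlinarith [ha.2]), neg_sq]
      _ = _ := by
          rw [intervalIntegral.integral_comp_neg fun s => 2 * √(1 - s ^ 2), neg_neg, neg_neg]
  have h_right : ∫ a in (-(l / 2))..(1 - l), 2 * √(1 - max (a ^ 2) ((a + l) ^ 2)) =
      ∫ s in (l / 2)..1, 2 * √(1 - s ^ 2) :=
    calc _ = ∫ a in (-(l / 2))..(1 - l), 2 * √(1 - (a + l) ^ 2) := by
          refine intervalIntegral.integral_congr fun a ha => ?_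
          rw [uIcc_of_le (by linarith)] at ha
          rw [max_eq_right (by nlinarith [ha.1])]
      _ = _ := by
          rw [intervalIntegral.integral_comp_add_right fun s => 2 * √(1 - s ^ 2)]
          congr 1 <;> ring
  rw [← intervalIntegral.integral_add_adjacent_intervals (hcont.intervalIntegrable _ _)
    (hcont.intervalIntegrable _ _), h_left, h_right, h_cap]
  ring

lemma toReal_volume_closedBall_inter_preimage_add_smul_needleDir {l : ℝ} (hl0 : 0 ≤ l)
    (hl2 : l ≤ 2) (θ : ℝ) :
    (volume (closedBall (0 : Plane) 1 ∩ (· + l • needleDir θ) ⁻¹' closedBall 0 1)).toReal =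
      2 * (arccos (l / 2) - l / 2 * √(1 - l ^ 2 / 4)) := by
  rw [volume_closedBall_inter_preimage_add_congr (w := l • needleDir 0)
    (by simp [norm_smul, abs_of_nonneg hl0])]
  let e : Plane → ℝ × ℝ := fun x => (x 0, x 1)
  have he : MeasurePreserving e volume volume :=
    (volume_preserving_finTwoArrow ℝ).comp
      (EuclideanSpace.volume_preserving_symm_measurableEquiv_toLp (Fin 2))
  have h_lens : closedBall (0 : Plane) 1 ∩ (· + l • needleDir 0) ⁻¹' closedBall 0 1 =
      e ⁻¹' {p | p.1 ^ 2 + p.2 ^ 2 ≤ 1 ∧ (p.1 + l) ^ 2 + p.2 ^ 2 ≤ 1} := by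
    ext x
    simp only [mem_inter_iff, mem_preimage, mem_closedBall_zero_iff]
    simp [e, needleDir, EuclideanSpace.norm_eq, Fin.sum_univ_two]
  have hS : MeasurableSet {p : ℝ × ℝ | p.1 ^ 2 + p.2 ^ 2 ≤ 1 ∧ (p.1 + l) ^ 2 + p.2 ^ 2 ≤ 1} := by
    measurability
  rw [h_lens, he.measure_preimage hS.nullMeasurableSet, volume_lens_prod_eq_integral hl2,
    ENNReal.toReal_ofReal (intervalIntegral.integral_nonneg (by linarith) fun _ _ => by positivity),
    integral_lens_chord hl0 hl2]

/-- the Buffon probability of the closed unit disk. -/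
theorem buffonProb_unitDisk (l : ℝ) (hl0 : 0 < l) (hl2 : l ≤ 2) :
    buffonProb (Metric.closedBall (0 : Plane) 1) l =
      (2 / π) * (Real.arccos (l / 2) - (l / 2) * Real.sqrt (1 - l ^ 2 / 4)) := by
  rw [buffonProb_eq_setIntegral_volume_inter measurableSet_closedBall
    measure_closedBall_lt_top.ne]
  simp_rw [toReal_volume_closedBall_inter_preimage_add_smul_needleDir hl0.le hl2]
  rw [setIntegral_const, EuclideanSpace.volume_closedBall_fin_two]
  simp [pi_pos.le]
  field_simp
end

section
/- Let D ⊆ ℝ² be the closed unit disk centered at the origin, let e ∈ ℝ² be a unit vector, and let 0 < l ≤ 2. Then the area of the set {x ∈ D : x + l·e ∈ D} equals 2·(arccos(l/2) − (l/2)·√(1 − l²/4)). -/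
open MeasureTheory Metric Set Real Pointwise
open scoped ENNReal RealInnerProductSpace

lemma aux_slice (m : ℝ) : volume {v : ℝ | v ^ 2 ≤ m} = ENNReal.ofReal (2 * Real.sqrt m) := by
  rcases lt_or_ge m 0 with hm | hm
  · have : {v : ℝ | v ^ 2 ≤ m} = ∅ := by
      ext v; simp only [mem_setOf_eq, mem_empty_iff_false, iff_false]
      nlinarith [sq_nonneg v]
    rw [this, measure_empty, Real.sqrt_eq_zero'.2 hm.le]
    simp
  · have : {v : ℝ | v ^ 2 ≤ m} = Icc (-Real.sqrt m) (Real.sqrt m) := by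
      ext v
      simp only [mem_setOf_eq, mem_Icc]
      constructor
      · intro h
        have := Real.abs_le_sqrt h
        exact abs_le.1 this
      · intro ⟨h1, h2⟩
        calc v ^ 2 ≤ Real.sqrt m ^ 2 := sq_le_sq' h1 h2
        _ = m := Real.sq_sqrt hm
    rw [this, Real.volume_Icc]
    congr 1
    ring

lemma aux_integral (c : ℝ) (hc0 : 0 ≤ c) (hc1 : c ≤ 1) :
    ∫ t in c..1, 2 * Real.sqrt (1 - t ^ 2) =
      Real.arccos c - c * Real.sqrt (1 - c ^ 2) := by
  have key : ∫ t in c..1, 2 * Real.sqrt (1 - t ^ 2) =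
      (Real.arcsin 1 + 1 * Real.sqrt (1 - 1 ^ 2)) -
        (Real.arcsin c + c * Real.sqrt (1 - c ^ 2)) := by
    apply intervalIntegral.integral_eq_sub_of_hasDerivAt_of_le (f := fun t => Real.arcsin t + t * Real.sqrt (1 - t ^ 2)) hc1
    · exact (Real.continuous_arcsin.continuousOn).add
        (continuousOn_id.mul ((continuous_const.sub (continuous_pow 2)).sqrt.continuousOn))
    · intro t ht
      have ht1 : -1 < t := lt_of_lt_of_le (by linarith) (le_of_lt ht.1)
      have ht2 : t < 1 := ht.2
      have hpos : 0 < 1 - t ^ 2 := by nlinarith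
      have hs : 0 < Real.sqrt (1 - t ^ 2) := Real.sqrt_pos.2 hpos
      have h1 : HasDerivAt Real.arcsin (1 / Real.sqrt (1 - t ^ 2)) t :=
        Real.hasDerivAt_arcsin (by linarith) (ne_of_lt ht2)
      have h2 : HasDerivAt (fun x : ℝ => 1 - x ^ 2) (-(2 * t)) t := by
        simpa using (hasDerivAt_pow 2 t).const_sub 1
      have h3 : HasDerivAt (fun x : ℝ => Real.sqrt (1 - x ^ 2))
          (-(2 * t) / (2 * Real.sqrt (1 - t ^ 2))) t := h2.sqrt (ne_of_gt hpos)
      have h4 : HasDerivAt (fun x : ℝ => x * Real.sqrt (1 - x ^ 2))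
          (1 * Real.sqrt (1 - t ^ 2) + t * (-(2 * t) / (2 * Real.sqrt (1 - t ^ 2)))) t :=
        (hasDerivAt_id t).mul h3
      have := h1.add h4
      convert this using 1
      · rfl
      have hsq : Real.sqrt (1 - t ^ 2) ^ 2 = 1 - t ^ 2 := Real.sq_sqrt hpos.le
      field_simp
      nlinarith [hsq, hs]
    · exact (continuous_const.mul ((continuous_const.sub (continuous_pow 2)).sqrt)).intervalIntegrable _ _
  rw [key, Real.arcsin_one, Real.arccos]
  norm_num
  ring

lemma aux_planar (l : ℝ) (hl0 : 0 < l) (hl2 : l ≤ 2) :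
    volume {p : ℝ × ℝ | p.1 ^ 2 + p.2 ^ 2 ≤ 1 ∧ (p.1 + l) ^ 2 + p.2 ^ 2 ≤ 1} =
      ENNReal.ofReal (2 * (Real.arccos (l / 2) - (l / 2) * Real.sqrt (1 - l ^ 2 / 4))) := by
  set g : ℝ → ℝ := fun u => 2 * Real.sqrt (min (1 - u ^ 2) (1 - (u + l) ^ 2)) with hg
  have hgc : Continuous g := continuous_const.mul
    (((continuous_const.sub (continuous_pow 2)).min
      (continuous_const.sub ((continuous_id.add continuous_const).pow 2))).sqrt)
  have hU : MeasurableSet {p : ℝ × ℝ | p.1 ^ 2 + p.2 ^ 2 ≤ 1 ∧ (p.1 + l) ^ 2 + p.2 ^ 2 ≤ 1} := by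
    apply MeasurableSet.inter
    · exact measurableSet_le ((continuous_fst.pow 2).add (continuous_snd.pow 2)).measurable measurable_const
    · exact measurableSet_le (((continuous_fst.add continuous_const).pow 2).add (continuous_snd.pow 2)).measurable measurable_const
  have h1 : volume {p : ℝ × ℝ | p.1 ^ 2 + p.2 ^ 2 ≤ 1 ∧ (p.1 + l) ^ 2 + p.2 ^ 2 ≤ 1} =
      ∫⁻ u : ℝ, ENNReal.ofReal (g u) := by
    rw [Measure.volume_eq_prod, Measure.prod_apply hU]
    congr 1
    ext u
    have : (Prod.mk u ⁻¹' {p : ℝ × ℝ | p.1 ^ 2 + p.2 ^ 2 ≤ 1 ∧ (p.1 + l) ^ 2 + p.2 ^ 2 ≤ 1}) =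
        {v : ℝ | v ^ 2 ≤ min (1 - u ^ 2) (1 - (u + l) ^ 2)} := by
      ext v
      simp only [mem_preimage, mem_setOf_eq, le_min_iff]
      constructor <;> intro ⟨a, b⟩ <;> constructor <;> linarith
    rw [this, aux_slice]
  rw [h1]
  -- support of g
  have hsupp : ∀ u : ℝ, u ∉ Icc (-1 : ℝ) (1 - l) → g u = 0 := by
    intro u hu
    simp only [mem_Icc, not_and_or, not_le] at hu
    have : min (1 - u ^ 2) (1 - (u + l) ^ 2) ≤ 0 := by
      rcases hu with hu | hu
      · exact le_trans (min_le_left _ _) (by nlinarith)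
      · exact le_trans (min_le_right _ _) (by nlinarith)
    simp [hg, Real.sqrt_eq_zero'.2 this]
  have hginteg : Integrable g := by
    apply hgc.integrable_of_hasCompactSupport
    exact HasCompactSupport.intro isCompact_Icc hsupp
  have hgnn : 0 ≤ g := fun u => mul_nonneg (by norm_num) (Real.sqrt_nonneg _)
  rw [← MeasureTheory.ofReal_integral_eq_lintegral_ofReal hginteg
    (Filter.Eventually.of_forall hgnn)]
  congr 1
  have hle : (-1 : ℝ) ≤ 1 - l := by linarith
  have hint : ∫ u : ℝ, g u = ∫ u in (-1 : ℝ)..(1 - l), g u := by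
    rw [← MeasureTheory.setIntegral_eq_integral_of_forall_compl_eq_zero
      (s := Icc (-1 : ℝ) (1 - l)) (fun x hx => hsupp x hx),
      intervalIntegral.integral_of_le hle, MeasureTheory.integral_Icc_eq_integral_Ioc]
  rw [hint]
  have hii : ∀ a b : ℝ, IntervalIntegrable g volume a b := fun a b => hgc.intervalIntegrable a b
  have hsplit : ∫ u in (-1 : ℝ)..(1 - l), g u =
      (∫ u in (-1 : ℝ)..(-(l / 2)), g u) + ∫ u in (-(l / 2) : ℝ)..(1 - l), g u :=
    (intervalIntegral.integral_add_adjacent_intervals (hii _ _) (hii _ _)).symm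
  have e1 : ∫ u in (-1 : ℝ)..(-(l / 2)), g u =
      ∫ u in (-1 : ℝ)..(-(l / 2)), 2 * Real.sqrt (1 - u ^ 2) := by
    apply intervalIntegral.integral_congr
    intro u hu
    rw [Set.uIcc_of_le (by linarith)] at hu
    have h2 : (u + l) ^ 2 ≤ u ^ 2 := by nlinarith [hu.1, hu.2]
    simp only [hg]
    rw [min_eq_left (by linarith)]
  have e2 : ∫ u in (-(l / 2) : ℝ)..(1 - l), g u =
      ∫ u in (-(l / 2) : ℝ)..(1 - l), 2 * Real.sqrt (1 - (u + l) ^ 2) := by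
    apply intervalIntegral.integral_congr
    intro u hu
    rw [Set.uIcc_of_le (by linarith)] at hu
    have h2 : u ^ 2 ≤ (u + l) ^ 2 := by nlinarith [hu.1, hu.2]
    simp only [hg]
    rw [min_eq_right (by linarith)]
  have e1' : ∫ u in (-1 : ℝ)..(-(l / 2)), 2 * Real.sqrt (1 - u ^ 2) =
      ∫ t in (l / 2 : ℝ)..1, 2 * Real.sqrt (1 - t ^ 2) := by
    have := intervalIntegral.integral_comp_neg (a := (l / 2 : ℝ)) (b := 1)
      (fun t => 2 * Real.sqrt (1 - t ^ 2))
    rw [← this]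
    apply intervalIntegral.integral_congr
    intro u _
    simp [neg_pow]
  have e2' : ∫ u in (-(l / 2) : ℝ)..(1 - l), 2 * Real.sqrt (1 - (u + l) ^ 2) =
      ∫ t in (l / 2 : ℝ)..1, 2 * Real.sqrt (1 - t ^ 2) := by
    have := intervalIntegral.integral_comp_add_right (a := (-(l / 2) : ℝ)) (b := 1 - l)
      (fun t => 2 * Real.sqrt (1 - t ^ 2)) l
    rw [show (-(l / 2) + l : ℝ) = l / 2 by ring, show (1 - l + l : ℝ) = 1 by ring] at this
    exact this
  rw [hsplit, e1, e2, e1', e2', aux_integral (l / 2) (by linarith) (by linarith)]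
  have : (l / 2) ^ 2 = l ^ 2 / 4 := by ring
  rw [this]
  ring

/-- the area of the set of points of the unit disk from which a needle of
length `l` in a fixed unit direction `e` stays in the disk. -/
theorem area_needle_set_unitDisk (e : Plane) (he : ‖e‖ = 1) (l : ℝ) (hl0 : 0 < l)
    (hl2 : l ≤ 2) :
    volume {x : Plane | x ∈ Metric.closedBall (0 : Plane) 1 ∧
        x + l • e ∈ Metric.closedBall (0 : Plane) 1} =
      ENNReal.ofReal (2 * (Real.arccos (l / 2) - (l / 2) * Real.sqrt (1 - l ^ 2 / 4))) := by
  classical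
  have hcard : Module.finrank ℝ Plane = Fintype.card (Fin 2) := by
    simp [finrank_euclideanSpace]
  have horth : Orthonormal ℝ (({0} : Set (Fin 2)).restrict (fun _ : Fin 2 => e)) := by
    rw [orthonormal_iff_ite]
    rintro ⟨i, hi⟩ ⟨j, hj⟩
    simp only [Set.mem_singleton_iff] at hi hj
    subst hi; subst hj
    simp only [Set.restrict_apply, if_pos rfl]
    rw [real_inner_self_eq_norm_sq,
      show ({0} : Set (Fin 2)).restrict (fun _ : Fin 2 => e) ⟨0, hi⟩ = e from rfl, he]
    norm_num
  obtain ⟨b, hb⟩ := horth.exists_orthonormalBasis_extension_of_card_eq hcard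
  have hb0 : b 0 = e := hb 0 rfl
  set φ : Plane → ℝ × ℝ := fun x => (b.repr x 0, b.repr x 1) with hφdef
  have hφ : MeasurePreserving φ volume volume := by
    have h3 := MeasureTheory.volume_preserving_finTwoArrow ℝ
    have h2 := EuclideanSpace.volume_preserving_symm_measurableEquiv_toLp (Fin 2)
    have h1 := b.measurePreserving_repr
    have := h3.comp (h2.comp h1)
    convert this using 1
    rfl
  have hU : MeasurableSet {p : ℝ × ℝ | p.1 ^ 2 + p.2 ^ 2 ≤ 1 ∧ (p.1 + l) ^ 2 + p.2 ^ 2 ≤ 1} := by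
    apply MeasurableSet.inter
    · exact measurableSet_le ((continuous_fst.pow 2).add (continuous_snd.pow 2)).measurable
        measurable_const
    · exact measurableSet_le
        (((continuous_fst.add continuous_const).pow 2).add (continuous_snd.pow 2)).measurable
        measurable_const
  have hnorm : ∀ y : Plane, y ∈ Metric.closedBall (0 : Plane) 1 ↔
      (b.repr y 0) ^ 2 + (b.repr y 1) ^ 2 ≤ 1 := by
    intro y
    rw [mem_closedBall_zero_iff, ← b.repr.norm_map y, EuclideanSpace.norm_eq]
    rw [show (1 : ℝ) = Real.sqrt 1 by simp]
    rw [Real.sqrt_le_sqrt_iff (by positivity)]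
    simp [Fin.sum_univ_two, Real.norm_eq_abs, sq_abs]
  have hrepr : ∀ x : Plane, b.repr (x + l • e) =
      b.repr x + l • EuclideanSpace.single 0 1 := by
    intro x
    rw [map_add, _root_.map_smul, ← hb0, b.repr_self]
  have hS : {x : Plane | x ∈ Metric.closedBall (0 : Plane) 1 ∧
      x + l • e ∈ Metric.closedBall (0 : Plane) 1} =
      φ ⁻¹' {p : ℝ × ℝ | p.1 ^ 2 + p.2 ^ 2 ≤ 1 ∧ (p.1 + l) ^ 2 + p.2 ^ 2 ≤ 1} := by
    ext x
    simp only [mem_setOf_eq, mem_preimage, hφdef]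
    rw [hnorm x, hnorm (x + l • e), hrepr x]
    simp [EuclideanSpace.single_apply]
  rw [hS, hφ.measure_preimage hU.nullMeasurableSet, aux_planar l hl0 hl2]
end

section
/- Let X ⊆ ℝ² be a bounded convex set and let l > 0. Let x ∈ X with x not in X_l and x not in the boundary ∂X, and set d = dist(x, ∂X) (so 0 < d < l). Then p_X(x, l) ≤ (1/(2π))·(π + 2·arcsin(d/l)). -/
/-!
Let `y` be a point of `∂X` nearest to `x`, so `|y - x| = d`, and let `u` be the outer unit normal
of a supporting line of `X` at `y`. Every `z ∈ X` satisfies `⟪u, z - x⟫ ≤ ⟪u, y - x⟫ ≤ d`, so a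
needle in direction `θ` ending in `X` has `l cos (θ - ψ) ≤ d`, where `u` has angle `ψ`. The set of
such `θ` in a period has measure at most `2π - 2 arccos (d / l) = π + 2 arcsin (d / l)`.
-/

open MeasureTheory Metric Set Real Pointwise
open scoped ENNReal RealInnerProductSpace

theorem Real.arccos_le_abs_of_cos_le {t c : ℝ} (ht : |t| ≤ π) (h : cos t ≤ c) :
    arccos c ≤ |t| :=
  calc arccos c ≤ arccos (cos |t|) := arccos_le_arccos (by rwa [cos_abs])
    _ = |t| := arccos_cos (abs_nonneg t) ht

theorem volume_setOf_cos_sub_le (φ c : ℝ) :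
    volume {θ ∈ Ico 0 (2 * π) | cos (θ - φ) ≤ c} ≤ ENNReal.ofReal (π + 2 * arcsin c) := by
  set A := {θ : ℝ | cos (θ - φ) ≤ c}
  have hA : MeasurableSet A := measurableSet_le (by fun_prop) measurable_const
  have hper : ∀ g : AddSubgroup.zmultiples (2 * π), (g +ᵥ ·) ⁻¹' A = A := by
    rintro ⟨_, n, rfl⟩
    ext θ
    simp [A, add_sub_assoc, add_comm _ (θ - φ), cos_add_int_mul_two_pi]
  have harccos : arccos c ≤ π := arccos_le_pi c
  calc volume {θ ∈ Ico 0 (2 * π) | θ ∈ A}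
      = volume (A ∩ Ioc 0 (0 + 2 * π)) := by
        rw [zero_add, sep_mem_eq, inter_comm]
        exact measure_congr ((ae_eq_refl A).inter Ico_ae_eq_Ioc)
    -- `A` is `2π`-periodic, so every period interval cuts out the same measure.
    _ = volume (A ∩ Ioc (φ - π) (φ - π + 2 * π)) :=
        (isAddFundamentalDomain_Ioc two_pi_pos 0).measure_set_eq
          (isAddFundamentalDomain_Ioc two_pi_pos _) hA hper
    _ ≤ volume (Icc (φ - π) (φ - arccos c) ∪ Icc (φ + arccos c) (φ + π)) := by
        refine measure_mono fun θ ⟨hθA, hθ₁, hθ₂⟩ ↦ ?_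
        have := arccos_le_abs_of_cos_le (abs_le.2 ⟨by linarith, by linarith⟩) hθA
        rcases le_abs'.1 this with h | h
        exacts [Or.inl ⟨by linarith, by linarith⟩, Or.inr ⟨by linarith, by linarith⟩]
    _ ≤ volume (Icc (φ - π) (φ - arccos c)) + volume (Icc (φ + arccos c) (φ + π)) :=
        measure_union_le _ _
    _ = ENNReal.ofReal (π + 2 * arcsin c) := by
        rw [volume_Icc, volume_Icc, ← ENNReal.ofReal_add (by linarith) (by linarith),
          arccos_eq_pi_div_two_sub_arcsin]
        ring_nf

theorem inner_needleDir_needleDir (ψ θ : ℝ) : ⟪needleDir ψ, needleDir θ⟫ = cos (θ - ψ) := by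
  simp [needleDir, PiLp.inner_apply, Fin.sum_univ_two, cos_sub]

theorem exists_eq_needleDir {u : Plane} (hu : ‖u‖ = 1) : ∃ ψ, u = needleDir ψ := by
  have hw : ‖(⟨u 0, u 1⟩ : ℂ)‖ = 1 := by
    rw [← hu, Complex.norm_def, Complex.normSq_mk, EuclideanSpace.norm_eq, Fin.sum_univ_two]
    simp only [Real.norm_eq_abs, sq, abs_mul_abs_self]
  obtain ⟨ψ, hψ⟩ := (Complex.norm_eq_one_iff _).1 hw
  refine ⟨ψ, ?_⟩
  ext i
  fin_cases i
  · simpa [needleDir] using (congrArg Complex.re hψ).symm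
  · simpa [needleDir] using (congrArg Complex.im hψ).symm

section InnerProductSpace

variable {E : Type*} [NormedAddCommGroup E] [InnerProductSpace ℝ E]

theorem Convex.exists_norm_eq_one_inner_le_of_notMem_interior [CompleteSpace E] {X : Set E}
    (hX : Convex ℝ X) (hint : (interior X).Nonempty) {y : E} (hy : y ∉ interior X) :
    ∃ u : E, ‖u‖ = 1 ∧ ∀ z ∈ X, ⟪u, z⟫ ≤ ⟪u, y⟫ := by
  obtain ⟨f, a, hf, hfX, hfy⟩ := geometric_hahn_banach_of_nonempty_interior hX (convex_singleton y)
    (disjoint_singleton_right.2 hy) hint (singleton_nonempty y)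
  set n := (InnerProductSpace.toDual ℝ E).symm f
  have hn : n ≠ 0 := by simpa [n] using hf
  refine ⟨‖n‖⁻¹ • n, norm_smul_inv_norm hn, fun z hz ↦ ?_⟩
  simp only [inner_smul_left, n, InnerProductSpace.toDual_symm_apply, conj_trivial]
  gcongr
  exact (hfX z hz).trans (hfy y rfl)

theorem Convex.exists_norm_eq_one_inner_sub_le_infDist [ProperSpace E] {X : Set E}
    (hX : Convex ℝ X) {x : E} (hx : x ∈ interior X) (hfr : (frontier X).Nonempty) :
    ∃ u : E, ‖u‖ = 1 ∧ ∀ z ∈ X, ⟪u, z - x⟫ ≤ infDist x (frontier X) := by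
  obtain ⟨y, hy, hxy⟩ := isClosed_frontier.exists_infDist_eq_dist hfr x
  obtain ⟨u, hu, huy⟩ := hX.exists_norm_eq_one_inner_le_of_notMem_interior ⟨x, hx⟩ hy.2
  refine ⟨u, hu, fun z hz ↦ ?_⟩
  calc ⟪u, z - x⟫ ≤ ⟪u, y - x⟫ := by simpa [inner_sub_right] using huy z hz
    _ ≤ ‖u‖ * ‖y - x‖ := real_inner_le_norm u _
    _ = infDist x (frontier X) := by rw [hu, one_mul, hxy, dist_comm, dist_eq_norm]

end InnerProductSpace

theorem pointwiseProb_le_general (X : Set Plane) (hXc : Convex ℝ X)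
    (l : ℝ) (hl : 0 < l) (x : Plane) (hx : x ∈ X) (hxl : x ∉ innerParallel X l)
    (hxb : x ∉ frontier X) (d : ℝ) (hd : d = Metric.infDist x (frontier X)) :
    pointwiseProb X x l ≤ (1 / (2 * π)) * (π + 2 * Real.arcsin (d / l)) := by
  have hxint : x ∈ interior X := by
    by_contra h
    exact hxb ⟨subset_closure hx, h⟩
  have hfr : (frontier X).Nonempty := by
    refine nonempty_frontier_iff.2 ⟨⟨x, hx⟩, fun hX ↦ hxl ?_⟩
    simp [innerParallel, hX]
  obtain ⟨u, hu, hux⟩ := hXc.exists_norm_eq_one_inner_sub_le_infDist hxint hfr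
  obtain ⟨ψ, rfl⟩ := exists_eq_needleDir hu
  have hsub : needleAngles X l x ⊆ {θ ∈ Ico 0 (2 * π) | cos (θ - ψ) ≤ d / l} := by
    rintro θ ⟨hθ, hθX⟩
    refine ⟨hθ, (le_div_iff₀ hl).2 ?_⟩
    have := hux _ hθX
    rwa [add_sub_cancel_left, inner_smul_right, inner_needleDir_needleDir, ← hd, mul_comm] at this
  unfold pointwiseProb
  gcongr
  exact ENNReal.toReal_le_of_le_ofReal (by linarith [neg_pi_div_two_le_arcsin (d / l)])
    ((measure_mono hsub).trans (volume_setOf_cos_sub_le ψ _))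

/-- pointwise bound on the probability for a point near the boundary. -/
theorem pointwiseProb_le (X : Set Plane) (hXb : Bornology.IsBounded X) (hXc : Convex ℝ X)
    (l : ℝ) (hl : 0 < l) (x : Plane) (hx : x ∈ X) (hxl : x ∉ innerParallel X l)
    (hxb : x ∉ frontier X) (d : ℝ) (hd : d = Metric.infDist x (frontier X)) :
    pointwiseProb X x l ≤ (1 / (2 * π)) * (π + 2 * Real.arcsin (d / l)) :=
  pointwiseProb_le_general X hXc l hl x hx hxl hxb d hd
end

section
/- Let X ⊆ ℝ² be a bounded convex set, let x ∈ X \ ∂X, and let y ∈ ∂X be a point of the boundary closest to x, i.e. ‖x − y‖ = dist(x, ∂X). Let l > ‖x − y‖. Then every point z ∈ X with ‖z − x‖ = l satisfies ⟨z − x, y − x⟩ ≤ ‖y − x‖², where ⟨·,·⟩ is the Euclidean inner product. (In other words, the open arc of the circle of radius l about x lying strictly beyond the tangent line at y contains no point of X.) -/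
open MeasureTheory Metric Set Real Pointwise
open scoped ENNReal RealInnerProductSpace

/-! If some `z ∈ X` had `⟪z - x, y - x⟫ > ‖y - x‖²`, then pushing `y` slightly away from `z`,
to `u = y + t • (y - z)`, would land strictly inside the ball about `x` of radius
`‖y - x‖ = dist(x, ∂X)`, which lies in the interior of `X`. Since `y` lies on the segment from
`z` to the interior point `u`, convexity would put `y` in the interior of `X`, contradicting
`y ∈ ∂X`. -/

theorem ball_infDist_frontier_subset_interior {E : Type*} [NormedAddCommGroup E]
    [NormedSpace ℝ E] {X : Set E} {x : E} (hx : x ∈ interior X) :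
    ball x (infDist x (frontier X)) ⊆ interior X := by
  rcases (infDist_nonneg (x := x) (s := frontier X)).eq_or_lt with h | h
  · simp [← h]
  refine (convex_ball x _).isPreconnected.subset_of_closure_inter_subset isOpen_interior
    ⟨x, mem_ball_self h, hx⟩ ?_
  rintro p ⟨hp_cl, hp_ball⟩
  by_contra hp
  exact ball_infDist_subset_compl hp_ball ⟨closure_mono interior_subset hp_cl, hp⟩

theorem Convex.mem_interior_of_add_smul_sub_mem_interior {E : Type*} [AddCommGroup E]
    [Module ℝ E] [TopologicalSpace E] [IsTopologicalAddGroup E] [ContinuousSMul ℝ E]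
    {X : Set E} (hX : Convex ℝ X) {y z : E} (hz : z ∈ closure X) {t : ℝ} (ht : 0 ≤ t)
    (hu : y + t • (y - z) ∈ interior X) : y ∈ interior X := by
  have hs : (1 + t)⁻¹ ∈ Ioc (0 : ℝ) 1 := ⟨by positivity, inv_le_one_of_one_le₀ (by linarith)⟩
  convert hX.add_smul_sub_mem_interior' hz hu hs using 1
  rw [show y + t • (y - z) - z = (1 + t) • (y - z) by module, smul_smul,
    inv_mul_cancel₀ (by positivity), one_smul, add_sub_cancel]

theorem Convex.inner_sub_le_norm_sq_of_ball_subset {E : Type*} [NormedAddCommGroup E]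
    [InnerProductSpace ℝ E] {X : Set E} (hX : Convex ℝ X) {x y z : E}
    (hball : ball x ‖y - x‖ ⊆ X) (hy : y ∉ interior X) (hz : z ∈ X) :
    ⟪z - x, y - x⟫ ≤ ‖y - x‖ ^ 2 := by
  by_contra! hc
  set v := y - x
  set w := z - x
  have hvw : 0 < ‖v - w‖ ^ 2 := by
    refine pow_pos (norm_pos_iff.2 fun h ↦ ?_) 2
    rw [sub_eq_zero.1 h, real_inner_self_eq_norm_sq] at hc
    exact lt_irrefl _ hc
  -- `t` minimizes `‖v + t • (v - w)‖` over the line through `y` and `z`.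
  set t := (⟪w, v⟫ - ‖v‖ ^ 2) / ‖v - w‖ ^ 2
  have ht : 0 < t := div_pos (by linarith) hvw
  have hnorm : ‖v + t • (v - w)‖ ^ 2 = ‖v‖ ^ 2 - t * (⟪w, v⟫ - ‖v‖ ^ 2) := by
    have htvw : t * ‖v - w‖ ^ 2 = ⟪w, v⟫ - ‖v‖ ^ 2 := div_mul_cancel₀ _ hvw.ne'
    rw [norm_add_sq_real, norm_smul, inner_smul_right, inner_sub_right,
      real_inner_self_eq_norm_sq, real_inner_comm, Real.norm_of_nonneg ht.le]
    linear_combination t * htvw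
  have hu : y + t • (y - z) ∈ ball x ‖v‖ := by
    rw [mem_ball, dist_eq_norm, show y + t • (y - z) - x = v + t • (v - w) by
      simp only [v, w]; abel_nf]
    exact lt_of_pow_lt_pow_left₀ 2 (norm_nonneg _)
      (hnorm ▸ sub_lt_self _ (mul_pos ht (sub_pos.2 hc)))
  exact hy <| hX.mem_interior_of_add_smul_sub_mem_interior (subset_closure hz) ht.le
    (interior_maximal hball isOpen_ball hu)

theorem needle_endpoint_halfplane_general (X : Set Plane)
    (hXc : Convex ℝ X) (x : Plane) (hx : x ∈ X \ frontier X) (y : Plane)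
    (hy : y ∈ frontier X) (hmin : ‖x - y‖ = Metric.infDist x (frontier X))
    (z : Plane) (hz : z ∈ X) :
    ⟪z - x, y - x⟫ ≤ ‖y - x‖ ^ 2 := by
  rw [self_sdiff_frontier] at hx
  have hball : ball x ‖y - x‖ ⊆ X := by
    rw [norm_sub_rev, hmin]
    exact (ball_infDist_frontier_subset_interior hx).trans interior_subset
  exact hXc.inner_sub_le_norm_sq_of_ball_subset hball hy.2 hz

/-- points of `X` on the circle of radius `l` about `x` lie in the closed
half-plane bounded by the tangent line at a closest boundary point `y`. -/
theorem needle_endpoint_halfplane (X : Set Plane) (hXb : Bornology.IsBounded X)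
    (hXc : Convex ℝ X) (x : Plane) (hx : x ∈ X \ frontier X) (y : Plane)
    (hy : y ∈ frontier X) (hmin : ‖x - y‖ = Metric.infDist x (frontier X))
    (l : ℝ) (hl : ‖x - y‖ < l) (z : Plane) (hz : z ∈ X) (hzl : ‖z - x‖ = l) :
    ⟪z - x, y - x⟫ ≤ ‖y - x‖ ^ 2 :=
  needle_endpoint_halfplane_general X hXc x hx y hy hmin z hz
end

section
/- Let X ⊆ ℝ² be a compact convex set with nonempty interior (in particular, X is not a point or a line segment). Then lim_{r → 0⁺} ℓ(∂X_r) = ℓ(∂X), and likewise lim_{r → 0⁺} ℓ(∂((X_r)^r)) = ℓ(∂X). -/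
open MeasureTheory Metric Set Real Pointwise
open scoped ENNReal RealInnerProductSpace

noncomputable section

/-!
If a compact convex set `K` lies in a compact set `L`, the nearest-point projection onto `K` is
`1`-Lipschitz and its image of `∂L` covers `∂K`: a point outside `K` keeps its projection when
pushed along the ray away from it, until the ray leaves `L`. Hence `ℓ(∂K) ≤ ℓ(∂L)`.
If `X ⊇ B(x₀, ρ)`, convexity gives `X ⊇ (X_r)^r ⊇ X_r ⊇ x₀ + (1 - r/ρ) • (X - x₀)` for
`0 < r ≤ ρ`, so both perimeters are squeezed between `(1 - r/ρ) ℓ(∂X)` and `ℓ(∂X)`.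
-/

open Filter Topology
open scoped NNReal

section MetricProjection

variable {E : Type*} [NormedAddCommGroup E] [InnerProductSpace ℝ E] {K : Set E}

open Classical in
/-- The nearest point of `K` to `x`, characterised by obtuse angles. Such a point exists when `K`
is nonempty, complete and convex; otherwise the junk value is `x`. -/
def metricProj (K : Set E) (x : E) : E :=
  if h : ∃ v ∈ K, ∀ w ∈ K, ⟪x - v, w - v⟫ ≤ 0 then h.choose else x

theorem eq_of_forall_inner_sub_nonpos {x v v' : E} (hv : v ∈ K) (hv' : v' ∈ K)
    (h : ∀ w ∈ K, ⟪x - v, w - v⟫ ≤ 0) (h' : ∀ w ∈ K, ⟪x - v', w - v'⟫ ≤ 0) : v = v' := by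
  have hsq : ‖v' - v‖ ^ 2 = ⟪x - v, v' - v⟫ + ⟪x - v', v - v'⟫ := by
    rw [← real_inner_self_eq_norm_sq, ← neg_sub v' v, inner_neg_right, ← sub_eq_add_neg,
      ← inner_sub_left, sub_sub_sub_cancel_left]
  have : ‖v' - v‖ ^ 2 ≤ 0 := hsq ▸ add_nonpos (h v' hv') (h' v hv)
  exact (sub_eq_zero.1 (norm_eq_zero.1 (pow_eq_zero_iff two_ne_zero |>.1
    (le_antisymm this (sq_nonneg _))))).symm

theorem metricProj_spec (hne : K.Nonempty) (hc : IsComplete K) (hconv : Convex ℝ K) (x : E) :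
    metricProj K x ∈ K ∧ ∀ w ∈ K, ⟪x - metricProj K x, w - metricProj K x⟫ ≤ 0 := by
  have hex : ∃ v ∈ K, ∀ w ∈ K, ⟪x - v, w - v⟫ ≤ 0 := by
    obtain ⟨v, hv, hmin⟩ := exists_norm_eq_iInf_of_complete_convex hne hc hconv x
    exact ⟨v, hv, (norm_eq_iInf_iff_real_inner_le_zero hconv hv).1 hmin⟩
  rw [metricProj, dif_pos hex]
  exact hex.choose_spec

theorem metricProj_eq_of_forall_inner_sub_nonpos (hne : K.Nonempty) (hc : IsComplete K)
    (hconv : Convex ℝ K) {x v : E} (hv : v ∈ K) (h : ∀ w ∈ K, ⟪x - v, w - v⟫ ≤ 0) :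
    metricProj K x = v :=
  eq_of_forall_inner_sub_nonpos (metricProj_spec hne hc hconv x).1 hv
    (metricProj_spec hne hc hconv x).2 h

theorem metricProj_eq_self (hne : K.Nonempty) (hc : IsComplete K) (hconv : Convex ℝ K) {x : E}
    (hx : x ∈ K) : metricProj K x = x :=
  metricProj_eq_of_forall_inner_sub_nonpos hne hc hconv hx fun w _ => by simp

theorem metricProj_add_smul_sub (hne : K.Nonempty) (hc : IsComplete K) (hconv : Convex ℝ K)
    (x : E) {t : ℝ} (ht : 0 ≤ t) :
    metricProj K (metricProj K x + t • (x - metricProj K x)) = metricProj K x := by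
  obtain ⟨hp, hinner⟩ := metricProj_spec hne hc hconv x
  refine metricProj_eq_of_forall_inner_sub_nonpos hne hc hconv hp fun w hw => ?_
  rw [add_sub_cancel_left, real_inner_smul_left]
  exact mul_nonpos_of_nonneg_of_nonpos ht (hinner w hw)

theorem lipschitzWith_metricProj (hne : K.Nonempty) (hc : IsComplete K) (hconv : Convex ℝ K) :
    LipschitzWith 1 (metricProj K) := by
  refine LipschitzWith.of_dist_le_mul fun x y => ?_
  obtain ⟨hp, hx⟩ := metricProj_spec hne hc hconv x
  obtain ⟨hq, hy⟩ := metricProj_spec hne hc hconv y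
  set p := metricProj K x
  set q := metricProj K y
  have hsq : ‖p - q‖ ^ 2 ≤ ‖x - y‖ * ‖p - q‖ :=
    calc ‖p - q‖ ^ 2 = ⟪x - y, p - q⟫ + ⟪x - p, q - p⟫ + ⟪y - q, p - q⟫ := by
          rw [← real_inner_self_eq_norm_sq, ← neg_sub p q, inner_neg_right, ← sub_eq_add_neg,
            ← inner_sub_left, ← inner_add_left]
          congr 1
          abel
      _ ≤ ⟪x - y, p - q⟫ := by linarith [hx q hq, hy p hp]
      _ ≤ ‖x - y‖ * ‖p - q‖ := real_inner_le_norm _ _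
  rw [NNReal.coe_one, one_mul, dist_eq_norm, dist_eq_norm]
  nlinarith [norm_nonneg (p - q), norm_nonneg (x - y)]

end MetricProjection

theorem exists_nonneg_add_smul_mem_frontier {F : Type*} [NormedAddCommGroup F] [NormedSpace ℝ F]
    {L : Set F} (hL : Bornology.IsBounded L) {p u : F} (hp : p ∈ L) (hu : u ≠ 0) :
    ∃ t : ℝ, 0 ≤ t ∧ p + t • u ∈ frontier L := by
  -- `|t|` folds the ray onto all of `ℝ`, which is preconnected.
  set γ : ℝ → F := fun t => p + |t| • u
  have hγ : Continuous γ := by fun_prop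
  obtain ⟨R, hR⟩ := hL.exists_norm_le
  have hescape : γ ⁻¹' L ≠ univ := by
    intro h
    have hR0 : 0 ≤ R := (norm_nonneg p).trans (hR p hp)
    set t := (R + ‖p‖ + 1) / ‖u‖
    have htu : ‖|t| • u‖ = R + ‖p‖ + 1 := by
      rw [norm_smul, Real.norm_eq_abs, abs_abs, abs_of_nonneg (by positivity),
        div_mul_cancel₀ _ (norm_ne_zero_iff.2 hu)]
    have hγt : ‖γ t‖ ≤ R := hR _ (h.symm ▸ mem_univ t : t ∈ γ ⁻¹' L)
    have hsub : ‖|t| • u‖ ≤ ‖γ t‖ + ‖p‖ := by simpa [γ] using norm_sub_le (γ t) p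
    linarith
  obtain ⟨t, ht⟩ := nonempty_frontier_iff.2 ⟨⟨0, by simpa [γ] using hp⟩, hescape⟩
  exact ⟨|t|, abs_nonneg t, hγ.frontier_preimage_subset L ht⟩

open AffineMap in
theorem hausdorffMeasure_frontier_homothety_image {E : Type*} [NormedAddCommGroup E]
    [NormedSpace ℝ E] [MeasurableSpace E] [BorelSpace E] {d : ℝ} (hd : 0 ≤ d) (x : E) {c : ℝ}
    (hc : c ≠ 0) (s : Set E) :
    μH[d] (frontier (homothety x c '' s)) = ‖c‖₊ ^ d • μH[d] (frontier s) := by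
  have hhomeo : IsHomeomorph (homothety x c) :=
    ⟨homothety_continuous x c, homothety_isOpenMap x c hc,
      (AffineEquiv.homothetyUnitsMulHom x (Units.mk0 c hc)).bijective⟩
  rw [← hhomeo.image_frontier, hausdorffMeasure_homothety_image hd x hc]

section PerimeterMonotonicity

variable {E : Type*} [NormedAddCommGroup E] [InnerProductSpace ℝ E] {K L : Set E}

theorem frontier_subset_image_metricProj_frontier (hne : K.Nonempty) (hc : IsComplete K)
    (hconv : Convex ℝ K) (hL : IsCompact L) (hKL : K ⊆ L) :
    frontier K ⊆ metricProj K '' frontier L := by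
  have hcont := (lipschitzWith_metricProj hne hc hconv).continuous
  have hcompl : metricProj K '' Kᶜ ⊆ metricProj K '' frontier L := by
    rintro _ ⟨x, hx, rfl⟩
    have hp := (metricProj_spec hne hc hconv x).1
    obtain ⟨t, ht, hmem⟩ := exists_nonneg_add_smul_mem_frontier hL.isBounded (hKL hp)
      (sub_ne_zero.2 (ne_of_mem_of_not_mem hp hx).symm)
    exact ⟨_, hmem, metricProj_add_smul_sub hne hc hconv x ht⟩
  have hclosed : IsClosed (metricProj K '' frontier L) :=
    ((hL.of_isClosed_subset isClosed_frontier hL.isClosed.frontier_subset).image hcont).isClosed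
  intro y hy
  rw [← metricProj_eq_self hne hc hconv (hc.isClosed.frontier_subset hy)]
  have hy' : y ∈ closure Kᶜ := (frontier_eq_closure_inter_closure (s := K) ▸ hy).2
  exact hclosed.closure_subset_iff.2 hcompl (image_closure_subset_closure_image hcont ⟨y, hy', rfl⟩)

theorem Convex.hausdorffMeasure_frontier_le_of_subset [MeasurableSpace E] [BorelSpace E]
    {d : ℝ} (hd : 0 ≤ d) (hconv : Convex ℝ K) (hc : IsComplete K) (hL : IsCompact L)
    (hKL : K ⊆ L) : μH[d] (frontier K) ≤ μH[d] (frontier L) := by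
  rcases K.eq_empty_or_nonempty with rfl | hne
  · simp
  calc μH[d] (frontier K) ≤ μH[d] (metricProj K '' frontier L) :=
        measure_mono (frontier_subset_image_metricProj_frontier hne hc hconv hL hKL)
    _ ≤ μH[d] (frontier L) := by
        simpa using (lipschitzWith_metricProj hne hc hconv).hausdorffMeasure_image_le hd _

open AffineMap in
theorem tendsto_hausdorffMeasure_frontier_of_homothety_subset [MeasurableSpace E] [BorelSpace E]
    {ι : Type*} {l : Filter ι} {d : ℝ} (hd : 0 ≤ d) {X : Set E} (hXc : IsCompact X) (hXconv : Convex ℝ X) (x : E)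
    {c : ι → ℝ} (hc : Tendsto c l (𝓝 1)) {Y : ι → Set E}
    (hY : ∀ᶠ i in l, IsCompact (Y i) ∧ Convex ℝ (Y i) ∧ homothety x (c i) '' X ⊆ Y i ∧ Y i ⊆ X) :
    Tendsto (fun i => μH[d] (frontier (Y i))) l (𝓝 (μH[d] (frontier X))) := by
  have hscale : Tendsto (fun i => (‖c i‖₊ ^ d : ℝ≥0) • μH[d] (frontier X)) l
      (𝓝 (μH[d] (frontier X))) := by
    have hnorm : Tendsto (fun i => ((‖c i‖₊ ^ d : ℝ≥0) : ℝ≥0∞)) l (𝓝 1) := by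
      have hcont : Continuous fun t : ℝ => ((‖t‖₊ ^ d : ℝ≥0) : ℝ≥0∞) := by
        fun_prop (disch := exact hd)
      simpa [Function.comp_def] using (hcont.tendsto 1).comp hc
    simpa [ENNReal.smul_def] using ENNReal.Tendsto.mul_const hnorm (Or.inl one_ne_zero)
  refine tendsto_of_tendsto_of_tendsto_of_le_of_le' hscale tendsto_const_nhds ?_ ?_
  · filter_upwards [hY, hc.eventually_ne one_ne_zero] with i hi hci
    obtain ⟨hYc, -, hsub, -⟩ := hi
    rw [← hausdorffMeasure_frontier_homothety_image hd x hci]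
    exact (hXconv.affine_image (homothety x (c i))).hausdorffMeasure_frontier_le_of_subset hd
      (hXc.image (homothety_continuous x (c i))).isComplete hYc hsub
  · filter_upwards [hY] with i hi
    obtain ⟨hYc, hYconv, -, hYX⟩ := hi
    exact hYconv.hausdorffMeasure_frontier_le_of_subset hd hYc.isComplete hXc hYX

end PerimeterMonotonicity

section ParallelSets

variable {X : Set Plane} {r : ℝ}

theorem mem_innerParallel_iff {x : Plane} :
    x ∈ innerParallel X r ↔ ∀ v ∈ closedBall (0 : Plane) r, x + v ∈ X := by
  refine ⟨fun h v hv => h ?_, fun h y hy => ?_⟩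
  · rwa [mem_closedBall, dist_eq_norm, add_sub_cancel_left, ← dist_zero_right]
  · simpa using h (y - x) (by rwa [mem_closedBall, dist_zero_right, ← dist_eq_norm])

theorem innerParallel_eq_biInter (X : Set Plane) (r : ℝ) :
    innerParallel X r = ⋂ v ∈ closedBall (0 : Plane) r, (· + v) ⁻¹' X := by
  ext x
  simp [mem_innerParallel_iff]

theorem innerParallel_subset (hr : 0 ≤ r) : innerParallel X r ⊆ X :=
  fun _ hx => hx (mem_closedBall_self hr)

theorem convex_innerParallel (hX : Convex ℝ X) (r : ℝ) : Convex ℝ (innerParallel X r) := by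
  rw [innerParallel_eq_biInter]
  exact convex_iInter₂ fun v _ => hX.translate_preimage_left v

theorem isCompact_innerParallel (hX : IsCompact X) (hr : 0 ≤ r) :
    IsCompact (innerParallel X r) := by
  refine hX.of_isClosed_subset ?_ (innerParallel_subset hr)
  rw [innerParallel_eq_biInter]
  exact isClosed_biInter fun v _ => hX.isClosed.preimage (continuous_add_const v)

theorem subset_exterParallel (A : Set Plane) (hr : 0 ≤ r) : A ⊆ exterParallel A r :=
  subset_add_left A (mem_closedBall_self hr)

theorem exterParallel_innerParallel_subset : exterParallel (innerParallel X r) r ⊆ X := by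
  rintro _ ⟨x, hx, v, hv, rfl⟩
  exact mem_innerParallel_iff.1 hx v hv

theorem homothety_image_subset_innerParallel (hX : Convex ℝ X) {x₀ : Plane} {ρ : ℝ}
    (hball : closedBall x₀ ρ ⊆ X) (hr : 0 < r) (hrρ : r ≤ ρ) :
    AffineMap.homothety x₀ (1 - r / ρ) '' X ⊆ innerParallel X r := by
  have hρ : 0 < ρ := hr.trans_le hrρ
  rintro _ ⟨x, hx, rfl⟩ z hz
  set y := AffineMap.homothety x₀ (1 - r / ρ) x
  set w := x₀ + (ρ / r) • (z - y)
  have hw : w ∈ X := by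
    refine hball ?_
    rw [mem_closedBall, dist_eq_norm, add_sub_cancel_left, norm_smul, Real.norm_of_nonneg
      (by positivity), ← dist_eq_norm, div_mul_eq_mul_div, div_le_iff₀ hr]
    exact mul_le_mul_of_nonneg_left hz hρ.le
  have hz' : z = (1 - r / ρ) • x + (r / ρ) • w := by
    rw [smul_add, smul_smul, div_mul_div_cancel₀ hρ.ne', div_self hr.ne', one_smul]
    simp only [y, AffineMap.homothety_apply, vsub_eq_sub, vadd_eq_add]
    module
  rw [hz']
  exact hX hx hw (sub_nonneg.2 ((div_le_one hρ).2 hrρ)) (by positivity) (sub_add_cancel 1 _)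

end ParallelSets

/-- the perimeters of the interior parallels `X_r` and of `(X_r)^r`
converge to the perimeter of `X` as `r → 0⁺`. -/
theorem perimeter_innerParallel_tendsto (X : Set Plane) (hXc : IsCompact X)
    (hXconv : Convex ℝ X) (hint : (interior X).Nonempty) :
    Filter.Tendsto (fun r : ℝ => μH[1] (frontier (innerParallel X r)))
      (nhdsWithin 0 (Set.Ioi 0)) (nhds (μH[1] (frontier X))) ∧
    Filter.Tendsto (fun r : ℝ => μH[1] (frontier (exterParallel (innerParallel X r) r)))
      (nhdsWithin 0 (Set.Ioi 0)) (nhds (μH[1] (frontier X))) := by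
  obtain ⟨x₀, hx₀⟩ := hint
  obtain ⟨ρ, hρ, hball⟩ := nhds_basis_closedBall.mem_iff.1 (mem_interior_iff_mem_nhds.1 hx₀)
  have hscale : Tendsto (fun r : ℝ => 1 - r / ρ) (𝓝[>] 0) (𝓝 1) := by
    refine (Continuous.tendsto' ?_ 0 1 (by simp)).mono_left nhdsWithin_le_nhds
    fun_prop
  have hsmall : ∀ᶠ r in 𝓝[>] (0 : ℝ), r ∈ Ioo 0 ρ := Ioo_mem_nhdsGT hρ
  constructor
  · refine tendsto_hausdorffMeasure_frontier_of_homothety_subset zero_le_one hXc hXconv x₀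
      hscale ?_
    filter_upwards [hsmall] with r ⟨hr, hrρ⟩
    exact ⟨isCompact_innerParallel hXc hr.le, convex_innerParallel hXconv r,
      homothety_image_subset_innerParallel hXconv hball hr hrρ.le, innerParallel_subset hr.le⟩
  · refine tendsto_hausdorffMeasure_frontier_of_homothety_subset zero_le_one hXc hXconv x₀
      hscale ?_
    filter_upwards [hsmall] with r ⟨hr, hrρ⟩
    exact ⟨(isCompact_innerParallel hXc hr.le).add (isCompact_closedBall 0 r),
      (convex_innerParallel hXconv r).add (convex_closedBall 0 r),
      (homothety_image_subset_innerParallel hXconv hball hr hrρ.le).trans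
        (subset_exterParallel _ hr.le),
      exterParallel_innerParallel_subset⟩
end
end
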